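/- arXiv:2209.11985 — 2 statements merged into one kernel-verified Lean document; each statement's English description precedes it below -/
import Mathlib

section
/- Coercivity perturbation lemma: let H be a Hilbert space, a, ã : H × H → ℝ bounded bilinear forms, K, K̃ ⊂ H subspaces, and P : K̃ → K a linear map with ‖v − Pv‖ ≤ δ‖v‖ and |ã(v,v) − a(Pv,Pv)| ≤ δ‖v‖² for all v ∈ K̃. If a(w,w) ≥ c_a ‖w‖² for all w ∈ K and δ is sufficiently small, namely δ(1 + c_a(2 + δ)) ≤ c_a/2, then ã(v,v) ≥ (c_a/2)‖v‖² for all v ∈ K̃. -/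
/-- Coercivity perturbation lemma: if `a` is coercive with constant `c_a` on the subspace
`K` of the Hilbert space `H`, `P` maps `K̃` into `K` with `‖v − Pv‖ ≤ δ‖v‖`, and the forms
differ by at most `δ‖v‖²` along `P`, then for `δ` small (explicitly
`δ(1 + c_a(2 + δ)) ≤ c_a/2`) the form `ã` is coercive with constant `c_a/2` on `K̃`. -/
theorem coercivity_perturbation
    {H : Type*} [NormedAddCommGroup H] [InnerProductSpace ℝ H]
    (a at_ : H →ₗ[ℝ] H →ₗ[ℝ] ℝ) (Ca Cat : ℝ)
    (habdd : ∀ v w : H, |a v w| ≤ Ca * ‖v‖ * ‖w‖)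
    (hatbdd : ∀ v w : H, |at_ v w| ≤ Cat * ‖v‖ * ‖w‖)
    (K Kt : Submodule ℝ H) (P : H →ₗ[ℝ] H) (hP : ∀ v ∈ Kt, P v ∈ K)
    (δ c_a : ℝ) (hδ : 0 ≤ δ) (hca : 0 < c_a)
    (hPclose : ∀ v ∈ Kt, ‖v - P v‖ ≤ δ * ‖v‖)
    (hclose : ∀ v ∈ Kt, |at_ v v - a (P v) (P v)| ≤ δ * ‖v‖ ^ 2)
    (hcoer : ∀ w ∈ K, a w w ≥ c_a * ‖w‖ ^ 2)
    (hsmall : δ * (1 + c_a * (2 + δ)) ≤ c_a / 2) :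
    ∀ v ∈ Kt, at_ v v ≥ (c_a / 2) * ‖v‖ ^ 2 := by
  intro v hv
  have hδ4 : δ ≤ 1/4 := by nlinarith [mul_nonneg hca.le (sq_nonneg δ), mul_nonneg hδ hca.le]
  have h1 := hPclose v hv
  have h2 := hclose v hv
  have h3 := hcoer (P v) (hP v hv)
  have hnv : (0:ℝ) ≤ ‖v‖ := norm_nonneg v
  have hPn : (1 - δ) * ‖v‖ ≤ ‖P v‖ := by
    have := norm_sub_norm_le v (P v)
    nlinarith [norm_nonneg (v - P v)]
  have hPn2 : (1 - δ)^2 * ‖v‖^2 ≤ ‖P v‖^2 := by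
    have h0 : (0:ℝ) ≤ (1 - δ) * ‖v‖ := by nlinarith
    nlinarith [norm_nonneg (P v)]
  have habs := abs_le.mp h2
  nlinarith [habs.1, habs.2, mul_le_mul_of_nonneg_right hsmall (sq_nonneg ‖v‖),
    mul_le_mul_of_nonneg_left hPn2 hca.le,
    mul_nonneg (mul_nonneg hca.le (sq_nonneg δ)) (sq_nonneg ‖v‖)]
end

section
/- Newton–Kantorovich style local convergence: under the hypotheses of the quantitative inverse function theorem (F differentiable on B_ε(x̃), ‖DF(x̃)⁻¹‖ ≤ c_inv, DF Lipschitz with constant c_L' on B_ε(x̃), c_L' c_inv ε ≤ 1/2, ‖F(x̃)‖ ≤ ε/(2c_inv)), the simplified Newton iteration x^{k+1} = x^k − DF(x̃)^{-1} F(x^k) starting at x⁰ = x̃ remains in B_ε(x̃) and converges to the unique zero x* of F in B_ε(x̃), with ‖x^{k+1} − x*‖ ≤ (c_inv c_L' (ε + ‖x^k − x*‖)) ‖x^k − x*‖ ≤ (1/2 + c_inv c_L' ‖x^k−x*‖)‖x^k − x*‖, hence linear convergence with rate ≤ 3/4 eventually. -/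
/-!
The chord map `G z = z - DF(x̃)⁻¹ F z` has the zeros of `F` as its fixed points, and
`G b - G a = -DF(x̃)⁻¹ (F b - F a - DF(x̃) (b - a))`. By the mean value inequality and the
Lipschitz bound on `DF`, this is at most `c_inv c_L' ε ‖b - a‖ ≤ ‖b - a‖ / 2` on `B_ε(x̃)`,
and `‖G x̃ - x̃‖ ≤ ε / 2`, so `G` is a contraction of `B_ε(x̃)` into itself. Banach's fixed
point theorem gives the zero, its uniqueness and the convergence of the iterates `Gᵏ x̃`.
-/

open Metric Filter Set Function

theorem LipschitzOnWith.mapsTo_closedBall_self {α : Type*} [PseudoMetricSpace α] {f : α → α}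
    {K : NNReal} {c : α} {r : ℝ} (hf : LipschitzOnWith K f (closedBall c r))
    (hc : dist (f c) c ≤ (1 - K) * r) : MapsTo f (closedBall c r) (closedBall c r) := by
  intro z hz
  have hr : 0 ≤ r := dist_nonneg.trans hz
  calc dist (f z) c ≤ dist (f z) (f c) + dist (f c) c := dist_triangle _ _ _
    _ ≤ K * dist z c + (1 - K) * r :=
        add_le_add (hf.dist_le_mul z hz c (mem_closedBall_self hr)) hc
    _ ≤ K * r + (1 - K) * r := by gcongr; exact hz
    _ = r := by ring

theorem eq_iterate_of_succ_eq {α : Type*} {f : α → α} {u : ℕ → α}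
    (h : ∀ n, u (n + 1) = f (u n)) (n : ℕ) : u n = f^[n] (u 0) := by
  induction n with
  | zero => rfl
  | succ n ih => rw [h, ih, iterate_succ_apply']

theorem nonneg_of_norm_sub_le_mul_norm_sub {X E : Type*} [NormedAddCommGroup X]
    [SeminormedAddCommGroup E] {f : X → E} {s : Set X} {K : ℝ}
    (hf : ∀ x₁ ∈ s, ∀ x₂ ∈ s, ‖f x₁ - f x₂‖ ≤ K * ‖x₁ - x₂‖)
    {a b : X} (ha : a ∈ s) (hb : b ∈ s) (hab : a ≠ b) : 0 ≤ K :=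
  nonneg_of_mul_nonneg_left ((norm_nonneg _).trans (hf a ha b hb))
    (norm_pos_iff.2 (sub_ne_zero.2 hab))

section

variable {X Y : Type*} [NormedAddCommGroup X] [NormedSpace ℝ X]
  [NormedAddCommGroup Y] [NormedSpace ℝ Y]

theorem norm_image_sub_sub_fderiv_le_of_lipschitz {F : X → Y} {F' : X → X →L[ℝ] Y} {x₀ : X}
    {ε K : ℝ} (hdiff : ∀ x ∈ closedBall x₀ ε, HasFDerivAt F (F' x) x)
    (hLip : ∀ x₁ ∈ closedBall x₀ ε, ∀ x₂ ∈ closedBall x₀ ε, ‖F' x₁ - F' x₂‖ ≤ K * ‖x₁ - x₂‖)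
    {a b : X} (ha : a ∈ closedBall x₀ ε) (hb : b ∈ closedBall x₀ ε) :
    ‖F b - F a - F' x₀ (b - a)‖ ≤ K * ε * ‖b - a‖ := by
  rcases eq_or_ne a b with rfl | hab
  · simp
  have hK : 0 ≤ K := nonneg_of_norm_sub_le_mul_norm_sub hLip ha hb hab
  have hx₀ : x₀ ∈ closedBall x₀ ε := mem_closedBall_self (dist_nonneg.trans ha)
  refine (convex_closedBall x₀ ε).norm_image_sub_le_of_norm_hasFDerivWithin_le'
    (fun z hz => (hdiff z hz).hasFDerivWithinAt) (fun z hz => ?_) ha hb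
  calc ‖F' z - F' x₀‖ ≤ K * ‖z - x₀‖ := hLip z hz x₀ hx₀
    _ ≤ K * ε := by gcongr; rwa [← dist_eq_norm]

def chordNewtonMap (A : X ≃L[ℝ] Y) (F : X → Y) (z : X) : X := z - A.symm (F z)

variable {A : X ≃L[ℝ] Y} {F : X → Y}

theorem isFixedPt_chordNewtonMap_iff {z : X} : IsFixedPt (chordNewtonMap A F) z ↔ F z = 0 := by
  simp [IsFixedPt, chordNewtonMap]

theorem chordNewtonMap_sub (a b : X) :
    chordNewtonMap A F b - chordNewtonMap A F a = -A.symm (F b - F a - A (b - a)) := by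
  simp only [chordNewtonMap, map_sub, ContinuousLinearEquiv.symm_apply_apply]
  abel

variable {F' : X → X →L[ℝ] Y} {x₀ : X} {ε c K : ℝ}

theorem norm_chordNewtonMap_sub_le (hdiff : ∀ x ∈ closedBall x₀ ε, HasFDerivAt F (F' x) x)
    (hA : (A : X →L[ℝ] Y) = F' x₀) (hAinv : ‖(A.symm : Y →L[ℝ] X)‖ ≤ c)
    (hLip : ∀ x₁ ∈ closedBall x₀ ε, ∀ x₂ ∈ closedBall x₀ ε, ‖F' x₁ - F' x₂‖ ≤ K * ‖x₁ - x₂‖)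
    {a b : X} (ha : a ∈ closedBall x₀ ε) (hb : b ∈ closedBall x₀ ε) :
    ‖chordNewtonMap A F b - chordNewtonMap A F a‖ ≤ c * K * ε * ‖b - a‖ := by
  have hmvt := norm_image_sub_sub_fderiv_le_of_lipschitz hdiff hLip ha hb
  rw [← hA] at hmvt
  rw [chordNewtonMap_sub, norm_neg]
  calc ‖A.symm (F b - F a - A (b - a))‖
      ≤ ‖(A.symm : Y →L[ℝ] X)‖ * ‖F b - F a - A (b - a)‖ :=
        (A.symm : Y →L[ℝ] X).le_opNorm _
    _ ≤ c * (K * ε * ‖b - a‖) :=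
        mul_le_mul hAinv hmvt (norm_nonneg _) ((norm_nonneg _).trans hAinv)
    _ = c * K * ε * ‖b - a‖ := by ring

theorem lipschitzOnWith_chordNewtonMap (hdiff : ∀ x ∈ closedBall x₀ ε, HasFDerivAt F (F' x) x)
    (hA : (A : X →L[ℝ] Y) = F' x₀) (hAinv : ‖(A.symm : Y →L[ℝ] X)‖ ≤ c)
    (hLip : ∀ x₁ ∈ closedBall x₀ ε, ∀ x₂ ∈ closedBall x₀ ε, ‖F' x₁ - F' x₂‖ ≤ K * ‖x₁ - x₂‖)
    (hsmall : K * c * ε ≤ 1 / 2) :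
    LipschitzOnWith (1 / 2) (chordNewtonMap A F) (closedBall x₀ ε) := by
  refine LipschitzOnWith.of_dist_le_mul fun b hb a ha => ?_
  rw [dist_eq_norm, dist_eq_norm]
  calc ‖chordNewtonMap A F b - chordNewtonMap A F a‖ ≤ c * K * ε * ‖b - a‖ :=
        norm_chordNewtonMap_sub_le hdiff hA hAinv hLip ha hb
    _ ≤ (1 / 2 : NNReal) * ‖b - a‖ := by
        gcongr
        push_cast
        linarith

theorem norm_chordNewtonMap_sub_le' (hdiff : ∀ x ∈ closedBall x₀ ε, HasFDerivAt F (F' x) x)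
    (hA : (A : X →L[ℝ] Y) = F' x₀) (hAinv : ‖(A.symm : Y →L[ℝ] X)‖ ≤ c)
    (hLip : ∀ x₁ ∈ closedBall x₀ ε, ∀ x₂ ∈ closedBall x₀ ε, ‖F' x₁ - F' x₂‖ ≤ K * ‖x₁ - x₂‖)
    {a b : X} (ha : a ∈ closedBall x₀ ε) (hb : b ∈ closedBall x₀ ε) :
    ‖chordNewtonMap A F b - chordNewtonMap A F a‖ ≤ c * K * (ε + ‖b - a‖) * ‖b - a‖ := by
  refine (norm_chordNewtonMap_sub_le hdiff hA hAinv hLip ha hb).trans ?_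
  rcases eq_or_ne b a with rfl | hba
  · simp
  have hK : 0 ≤ K := nonneg_of_norm_sub_le_mul_norm_sub hLip hb ha hba
  have hc : 0 ≤ c := (norm_nonneg _).trans hAinv
  gcongr
  exact le_add_of_nonneg_right (norm_nonneg _)

theorem mapsTo_chordNewtonMap_closedBall
    (hG : LipschitzOnWith (1 / 2) (chordNewtonMap A F) (closedBall x₀ ε)) (hc : 0 < c)
    (hAinv : ‖(A.symm : Y →L[ℝ] X)‖ ≤ c) (hF : ‖F x₀‖ ≤ ε / (2 * c)) :
    MapsTo (chordNewtonMap A F) (closedBall x₀ ε) (closedBall x₀ ε) := by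
  refine hG.mapsTo_closedBall_self ?_
  rw [dist_eq_norm]
  calc ‖chordNewtonMap A F x₀ - x₀‖ = ‖A.symm (F x₀)‖ := by simp [chordNewtonMap]
    _ ≤ c * ‖F x₀‖ := ((A.symm : Y →L[ℝ] X).le_opNorm _).trans (by gcongr)
    _ ≤ c * (ε / (2 * c)) := by gcongr
    _ = (1 - (1 / 2 : NNReal)) * ε := by norm_num; field_simp

end

theorem simplified_newton_convergence_general
    {X Y : Type*} [NormedAddCommGroup X] [NormedSpace ℝ X] [CompleteSpace X]
    [NormedAddCommGroup Y] [NormedSpace ℝ Y]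
    (F : X → Y)
    (xt : X) (ε c_inv c_L' : ℝ) (hε : 0 < ε) (hcinv : 0 < c_inv)
    (F' : X → X →L[ℝ] Y)
    (hdiff : ∀ x ∈ closedBall xt ε, HasFDerivAt F (F' x) x)
    (A : X ≃L[ℝ] Y) (hA : (A : X →L[ℝ] Y) = F' xt)
    (hAinv : ‖(A.symm : Y →L[ℝ] X)‖ ≤ c_inv)
    (hLip : ∀ x₁ ∈ closedBall xt ε, ∀ x₂ ∈ closedBall xt ε,
      ‖F' x₁ - F' x₂‖ ≤ c_L' * ‖x₁ - x₂‖)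
    (hsmall₁ : c_L' * c_inv * ε ≤ 1 / 2)
    (hsmall₂ : ‖F xt‖ ≤ ε / (2 * c_inv))
    (x : ℕ → X) (hx0 : x 0 = xt)
    (hxrec : ∀ k, x (k + 1) = x k - A.symm (F (x k))) :
    ∃ xs : X, xs ∈ closedBall xt ε ∧ F xs = 0 ∧
      (∀ z ∈ closedBall xt ε, F z = 0 → z = xs) ∧
      (∀ k, x k ∈ closedBall xt ε) ∧
      (∀ k, ‖x (k + 1) - xs‖ ≤ c_inv * c_L' * (ε + ‖x k - xs‖) * ‖x k - xs‖) ∧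
      Tendsto x atTop (nhds xs) := by
  have hxt : xt ∈ closedBall xt ε := mem_closedBall_self hε.le
  have hGlip := lipschitzOnWith_chordNewtonMap hdiff hA hAinv hLip hsmall₁
  have hmaps := mapsTo_chordNewtonMap_closedBall hGlip hcinv hAinv hsmall₂
  have hcontr : ContractingWith (1 / 2) (hmaps.restrict _ _ _) :=
    ⟨by norm_num, hGlip.mapsToRestrict hmaps⟩
  obtain ⟨xs, hxs, hfix, htend, -⟩ := hcontr.exists_fixedPoint'
    isClosed_closedBall.isComplete hmaps hxt (edist_ne_top _ _)
  have hx : x = fun k => (chordNewtonMap A F)^[k] xt :=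
    funext fun k => hx0 ▸ eq_iterate_of_succ_eq hxrec k
  have hxball : ∀ k, x k ∈ closedBall xt ε := fun k => hx ▸ hmaps.iterate k hxt
  refine ⟨xs, hxs, isFixedPt_chordNewtonMap_iff.1 hfix, fun z hz hFz => ?_, hxball,
    fun k => ?_, hx ▸ htend⟩
  · exact congrArg Subtype.val (hcontr.fixedPoint_unique' (x := ⟨z, hz⟩) (y := ⟨xs, hxs⟩)
      (Subtype.ext (isFixedPt_chordNewtonMap_iff.2 hFz)) (Subtype.ext hfix))
  · have hrate := norm_chordNewtonMap_sub_le' hdiff hA hAinv hLip hxs (hxball k)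
    rw [hfix.eq] at hrate
    rwa [hxrec]

/-- Newton–Kantorovich style local convergence of the simplified (chord) Newton iteration
`x^{k+1} = x^k − DF(x̃)⁻¹ F(x^k)` starting at `x⁰ = x̃`: under the hypotheses of the
quantitative inverse function theorem, the iterates stay in `B_ε(x̃)` and converge to the
unique zero `x*` of `F` in `B_ε(x̃)`, with
`‖x^{k+1} − x*‖ ≤ c_inv c_L' (ε + ‖x^k − x*‖) ‖x^k − x*‖`. -/
theorem simplified_newton_convergence
    {X Y : Type*} [NormedAddCommGroup X] [NormedSpace ℝ X] [CompleteSpace X]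
    [NormedAddCommGroup Y] [NormedSpace ℝ Y] [CompleteSpace Y]
    (F : X → Y) (hF : Continuous F)
    (xt : X) (ε c_inv c_L' : ℝ) (hε : 0 < ε) (hcinv : 0 < c_inv)
    (F' : X → X →L[ℝ] Y)
    (hdiff : ∀ x ∈ closedBall xt ε, HasFDerivAt F (F' x) x)
    (A : X ≃L[ℝ] Y) (hA : (A : X →L[ℝ] Y) = F' xt)
    (hAinv : ‖(A.symm : Y →L[ℝ] X)‖ ≤ c_inv)
    (hLip : ∀ x₁ ∈ closedBall xt ε, ∀ x₂ ∈ closedBall xt ε,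
      ‖F' x₁ - F' x₂‖ ≤ c_L' * ‖x₁ - x₂‖)
    (hsmall₁ : c_L' * c_inv * ε ≤ 1 / 2)
    (hsmall₂ : ‖F xt‖ ≤ ε / (2 * c_inv))
    (x : ℕ → X) (hx0 : x 0 = xt)
    (hxrec : ∀ k, x (k + 1) = x k - A.symm (F (x k))) :
    ∃ xs : X, xs ∈ closedBall xt ε ∧ F xs = 0 ∧
      (∀ z ∈ closedBall xt ε, F z = 0 → z = xs) ∧
      (∀ k, x k ∈ closedBall xt ε) ∧
      (∀ k, ‖x (k + 1) - xs‖ ≤ c_inv * c_L' * (ε + ‖x k - xs‖) * ‖x k - xs‖) ∧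
      Tendsto x atTop (nhds xs) :=
  simplified_newton_convergence_general F xt ε c_inv c_L' hε hcinv F' hdiff A hA hAinv hLip hsmall₁
    hsmall₂ x hx0 hxrec
end
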